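/- sup{ n·F̄(2α/θ_{n,b}) : b>n^{β+ε} } → 0 as n→∞ (in particular F̄(2α/θ_{n,b})=O(1/n) uniformly over b>n^{β+ε}). -/

import Mathlib

open MeasureTheory ProbabilityTheory Filter

noncomputable section

/-- Right tail `F̄(x) = F((x,∞))` of a measure on `ℝ`, as a real number. -/
def rtail (F : Measure ℝ) (x : ℝ) : ℝ := (F (Set.Ioi x)).toReal

/-- `L` is slowly varying at infinity. -/
def SlowlyVarying (L : ℝ → ℝ) : Prop :=
  ∀ t > 0, Tendsto (fun x => L (t * x) / L x) atTop (nhds 1)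

/-- The twisting parameter `θ_{n,b} = -log(n F̄(b)) / b`. -/
def theta (F : Measure ℝ) (n : ℕ) (b : ℝ) : ℝ := -Real.log ((n : ℝ) * rtail F b) / b

/-!
Potter-type bounds: since `F̄(2x)/F̄(x) → 2^{-α}` and `F̄` is monotone, iterating the doubling
inequality gives `x^{-q} ≤ F̄(x) ≤ x^{-p}` for large `x` whenever `0 < p < α < q`.
Put `γ = 1/(β+ε) < α`, so that `b > n^{β+ε}` means `n < b^γ`. The lower bound with `q = 2α`
gives `-log(n F̄(b)) ≤ 2α log b`, i.e. `2α/θ_{n,b} ≥ b / log b`; hence `n F̄(b)` and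
`n F̄(2α/θ_{n,b})` are both at most `b^γ (b / log b)^{-p}`, which tends to `0` once `γ < p < α`.
-/

open Real Topology

lemma le_of_le_on_Icc_of_map_two_mul_le {h : ℝ → ℝ} {x₀ M : ℝ} (hx₀ : 0 < x₀)
    (hdbl : ∀ x ≥ x₀, h (2 * x) ≤ h x) (hM : ∀ x ∈ Set.Icc x₀ (2 * x₀), h x ≤ M) :
    ∀ x ≥ x₀, h x ≤ M := by
  suffices key : ∀ k : ℕ, ∀ x ∈ Set.Icc x₀ (2 ^ k * x₀), h x ≤ M by
    intro x hx
    obtain ⟨k, hk⟩ := pow_unbounded_of_one_lt (x / x₀) one_lt_two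
    rw [div_lt_iff₀ hx₀] at hk
    exact key k x ⟨hx, hk.le⟩
  intro k
  induction k with
  | zero => exact fun x hx => hM x ⟨hx.1, by linarith [hx.2]⟩
  | succ k ih =>
    rintro x ⟨hx₀x, hx⟩
    rcases le_or_gt x (2 * x₀) with hx' | hx'
    · exact hM x ⟨hx₀x, hx'⟩
    · calc h x = h (2 * (x / 2)) := by ring_nf
        _ ≤ h (x / 2) := hdbl _ (by linarith)
        _ ≤ M := ih _ ⟨by linarith, by rw [pow_succ] at hx; linarith⟩

lemma tendsto_div_log_atTop : Tendsto (fun x => x / log x) atTop atTop := by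
  have hpos : ∀ᶠ x in atTop, log x / x ∈ Set.Ioi (0 : ℝ) := by
    filter_upwards [eventually_gt_atTop 1] with x hx
    exact div_pos (log_pos hx) (by linarith)
  have h := (tendsto_nhdsWithin_iff.2
    ⟨isLittleO_log_id_atTop.tendsto_div_nhds_zero, hpos⟩).inv_tendsto_nhdsGT_zero
  exact h.congr fun x => by simp

lemma tendsto_rpow_mul_div_log_rpow_neg {γ p : ℝ} (hγp : γ < p) :
    Tendsto (fun b => b ^ γ * (b / log b) ^ (-p)) atTop (𝓝 0) := by
  refine (isLittleO_log_rpow_rpow_atTop p (sub_pos.2 hγp)).tendsto_div_nhds_zero.congr' ?_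
  filter_upwards [eventually_gt_atTop 1] with b hb
  have hb₀ : 0 < b := by linarith
  rw [rpow_neg (div_nonneg hb₀.le (log_pos hb).le), div_rpow hb₀.le (log_pos hb).le,
    inv_div, rpow_sub hb₀]
  field_simp

section RegularVariation

variable {G : ℝ → ℝ} {α : ℝ}

lemma exists_mul_rpow_le_of_tendsto_div (hG : Antitone G) (hpos : ∀ x > 0, 0 < G x)
    (hratio : Tendsto (fun x => G (2 * x) / G x) atTop (𝓝 (2 ^ (-α))))
    {p : ℝ} (hp : 0 < p) (hpα : p < α) :
    ∃ C, ∀ᶠ x in atTop, G x * x ^ p ≤ C := by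
  have hlt : (2 : ℝ) ^ (-α) < 2 ^ (-p) := rpow_lt_rpow_of_exponent_lt one_lt_two (by linarith)
  obtain ⟨x₀, hx₀⟩ := eventually_atTop.1
    ((hratio.eventually_lt_const hlt).and (eventually_gt_atTop 0))
  set x₁ := max x₀ 1
  have hx₁ : 0 < x₁ := by positivity
  refine ⟨G x₁ * (2 * x₁) ^ p,
    eventually_atTop.2 ⟨x₁, le_of_le_on_Icc_of_map_two_mul_le hx₁ ?_ ?_⟩⟩
  · intro x hx
    obtain ⟨hdiv, hxpos⟩ := hx₀ x (le_trans (le_max_left _ _) hx)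
    rw [div_lt_iff₀ (hpos x hxpos)] at hdiv
    calc G (2 * x) * (2 * x) ^ p = G (2 * x) * 2 ^ p * x ^ p := by
          rw [mul_rpow zero_le_two hxpos.le]; ring
      _ ≤ (2 ^ (-p) * G x) * 2 ^ p * x ^ p := by gcongr
      _ = G x * x ^ p := by
          rw [rpow_neg zero_le_two]; field_simp
  · rintro x ⟨hx, hx'⟩
    exact mul_le_mul (hG hx) (rpow_le_rpow (by linarith) hx' hp.le) (rpow_nonneg (by linarith) _)
      (hpos _ hx₁).le

lemma exists_rpow_div_le_of_tendsto_div (hG : Antitone G) (hpos : ∀ x > 0, 0 < G x)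
    (hratio : Tendsto (fun x => G (2 * x) / G x) atTop (𝓝 (2 ^ (-α))))
    {q : ℝ} (hq : 0 < q) (hαq : α < q) :
    ∃ C, ∀ᶠ x in atTop, x ^ (-q) / G x ≤ C := by
  have hlt : (2 : ℝ) ^ (-q) < 2 ^ (-α) := rpow_lt_rpow_of_exponent_lt one_lt_two (by linarith)
  obtain ⟨x₀, hx₀⟩ := eventually_atTop.1
    ((hratio.eventually_const_lt hlt).and (eventually_gt_atTop 0))
  set x₁ := max x₀ 1
  have hx₁ : 0 < x₁ := by positivity
  refine ⟨x₁ ^ (-q) / G (2 * x₁),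
    eventually_atTop.2 ⟨x₁, le_of_le_on_Icc_of_map_two_mul_le hx₁ ?_ ?_⟩⟩
  · intro x hx
    obtain ⟨hdiv, hxpos⟩ := hx₀ x (le_trans (le_max_left _ _) hx)
    have hGx := hpos x hxpos
    rw [lt_div_iff₀ hGx] at hdiv
    rw [mul_rpow zero_le_two hxpos.le, div_le_div_iff₀ (hpos _ (by linarith)) hGx]
    calc 2 ^ (-q) * x ^ (-q) * G x = x ^ (-q) * (2 ^ (-q) * G x) := by ring
      _ ≤ x ^ (-q) * G (2 * x) := by gcongr
  · rintro x ⟨hx, hx'⟩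
    exact div_le_div₀ (by positivity) (rpow_le_rpow_of_nonpos hx₁ hx (by linarith))
      (hpos _ (by linarith)) (hG hx')

lemma eventually_le_rpow_neg_of_tendsto_div (hG : Antitone G) (hpos : ∀ x > 0, 0 < G x)
    (hratio : Tendsto (fun x => G (2 * x) / G x) atTop (𝓝 (2 ^ (-α))))
    (hα : 0 < α) {p : ℝ} (hpα : p < α) :
    ∀ᶠ x in atTop, G x ≤ x ^ (-p) := by
  obtain ⟨p', hp', hp'α⟩ := exists_between (max_lt hpα hα)
  obtain ⟨hpp', hp'⟩ := max_lt_iff.1 hp'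
  obtain ⟨C, hC⟩ := exists_mul_rpow_le_of_tendsto_div hG hpos hratio hp' hp'α
  filter_upwards [hC, (tendsto_rpow_atTop (sub_pos.2 hpp')).eventually_ge_atTop C,
    eventually_gt_atTop 0] with x hCx hx hx₀
  calc G x = G x * x ^ p' * x ^ (-p') := by rw [mul_assoc, ← rpow_add hx₀]; simp
    _ ≤ C * x ^ (-p') := by gcongr
    _ ≤ x ^ (p' - p) * x ^ (-p') := by gcongr
    _ = x ^ (-p) := by rw [← rpow_add hx₀]; ring_nf

lemma eventually_rpow_neg_le_of_tendsto_div (hG : Antitone G) (hpos : ∀ x > 0, 0 < G x)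
    (hratio : Tendsto (fun x => G (2 * x) / G x) atTop (𝓝 (2 ^ (-α))))
    (hα : 0 < α) {q : ℝ} (hαq : α < q) :
    ∀ᶠ x in atTop, x ^ (-q) ≤ G x := by
  obtain ⟨q', hαq', hq'q⟩ := exists_between hαq
  obtain ⟨C, hC⟩ := exists_rpow_div_le_of_tendsto_div hG hpos hratio (hα.trans hαq') hαq'
  filter_upwards [hC, (tendsto_rpow_atTop (sub_pos.2 hq'q)).eventually_ge_atTop C,
    eventually_gt_atTop 0] with x hCx hx hx₀
  have hGx := hpos x hx₀
  rw [div_le_iff₀ hGx] at hCx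
  calc x ^ (-q) = x ^ (-q') / x ^ (q - q') := by
        rw [← rpow_sub hx₀]; ring_nf
    _ ≤ x ^ (q - q') * G x / x ^ (q - q') := by gcongr; exact hCx.trans (by gcongr)
    _ = G x := by field_simp

lemma eventually_mul_lt_of_tendsto_div (hG : Antitone G) (hpos : ∀ x > 0, 0 < G x)
    (hratio : Tendsto (fun x => G (2 * x) / G x) atTop (𝓝 (2 ^ (-α))))
    (hα : 0 < α) {γ δ : ℝ} (hγ : γ < α) (hδ : 0 < δ) :
    ∀ᶠ b in atTop, ∀ t, 1 ≤ t → t ≤ b ^ γ →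
      t * G b < 1 ∧ t * G (2 * α * b / -log (t * G b)) < δ := by
  obtain ⟨p, hγp, hpα⟩ := exists_between hγ
  have hupper := eventually_le_rpow_neg_of_tendsto_div hG hpos hratio hα hpα
  filter_upwards [eventually_gt_atTop 0, tendsto_log_atTop.eventually_ge_atTop 1,
    tendsto_div_log_atTop.eventually hupper,
    eventually_rpow_neg_le_of_tendsto_div hG hpos hratio hα (by linarith : α < 2 * α),
    (tendsto_rpow_mul_div_log_rpow_neg hγp).eventually_lt_const (lt_min one_pos hδ)]
    with b hb₀ hlog hG_upper hG_lower hsmall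
  intro t ht₁ htb
  have htail_le : ∀ z ≥ b / log b, t * G z < min 1 δ := fun z hz =>
    calc t * G z ≤ b ^ γ * (b / log b) ^ (-p) := by
          gcongr
          · exact (hpos _ ((div_pos hb₀ (by linarith)).trans_le hz)).le
          · exact (hG hz).trans hG_upper
      _ < min 1 δ := hsmall
  have hA : t * G b < 1 := (htail_le b (div_le_self hb₀.le hlog)).trans_le (min_le_left _ _)
  refine ⟨hA, (htail_le _ ?_).trans_le (min_le_right _ _)⟩
  have htG : 0 < t * G b := mul_pos (by linarith) (hpos b hb₀)
  have hu : 0 < -log (t * G b) := neg_pos.2 (log_neg htG hA)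
  have hu_le : -log (t * G b) ≤ 2 * α * log b := by
    have : b ^ (-(2 * α)) ≤ t * G b := hG_lower.trans (le_mul_of_one_le_left (hpos b hb₀).le ht₁)
    have := log_le_log (by positivity) this
    rw [log_rpow hb₀] at this
    linarith
  calc b / log b = 2 * α * b / (2 * α * log b) := by field_simp
    _ ≤ 2 * α * b / -log (t * G b) := by gcongr

end RegularVariation

lemma rtail_antitone (F : Measure ℝ) [IsFiniteMeasure F] : Antitone (rtail F) :=
  fun _ _ hxy => ENNReal.toReal_mono (measure_ne_top F _) (measure_mono (Set.Ioi_subset_Ioi hxy))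

lemma SlowlyVarying.tendsto_mul_rpow_div {G L : ℝ → ℝ} {α : ℝ} (hL : SlowlyVarying L)
    (hLpos : ∀ x > 0, 0 < L x) (hGL : ∀ x > 0, G x = L x * x ^ (-α)) :
    Tendsto (fun x => G (2 * x) / G x) atTop (𝓝 (2 ^ (-α))) := by
  have h := (hL 2 two_pos).mul_const ((2 : ℝ) ^ (-α))
  rw [one_mul] at h
  refine h.congr' ?_
  filter_upwards [eventually_gt_atTop 0] with x hx
  have := hLpos x hx
  rw [hGL _ (by positivity), hGL x hx, mul_rpow zero_le_two hx.le]
  field_simp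

theorem stmt2_general
    (F : Measure ℝ) [IsProbabilityMeasure F]
    (α : ℝ) (hα : 1 < α)
    (L : ℝ → ℝ) (hLpos : ∀ x > 0, 0 < L x) (hL : SlowlyVarying L)
    (htail : ∀ x > 0, rtail F x = L x * x ^ (-α))
    (β : ℝ) (hβ : β = 1 / min α 2)
    (ε : ℝ) (hε : 0 < ε) :
    ∀ δ > 0, ∃ N : ℕ, ∀ n ≥ N, ∀ b > (n : ℝ) ^ (β + ε),
      (n : ℝ) * rtail F b < 1 ∧
      (n : ℝ) * rtail F (2 * α / theta F n b) < δ := by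
  intro δ hδ
  have hα₀ : 0 < α := by linarith
  have hβ₀ : 0 < β := by rw [hβ]; positivity
  have hγα : (β + ε)⁻¹ < α := calc
    (β + ε)⁻¹ < β⁻¹ := inv_strictAnti₀ hβ₀ (by linarith)
    _ = min α 2 := by rw [hβ, one_div, inv_inv]
    _ ≤ α := min_le_left _ _
  have hpos : ∀ x > 0, 0 < rtail F x := fun x hx => by
    rw [htail x hx]; exact mul_pos (hLpos x hx) (rpow_pos_of_pos hx _)
  obtain ⟨B, hB⟩ := eventually_atTop.1 <| eventually_mul_lt_of_tendsto_div (rtail_antitone F)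
    hpos (hL.tendsto_mul_rpow_div hLpos htail) hα₀ hγα hδ
  obtain ⟨N, hN⟩ := eventually_atTop.1 <| (eventually_ge_atTop 1).and <|
    ((tendsto_rpow_atTop (by linarith : 0 < β + ε)).comp
      tendsto_natCast_atTop_atTop).eventually_ge_atTop B
  refine ⟨N, fun n hn b hb => ?_⟩
  obtain ⟨hn₁, hnB⟩ := hN n hn
  have hnb : (n : ℝ) ≤ b ^ (β + ε)⁻¹ := (le_rpow_inv_iff_of_pos n.cast_nonneg
    ((rpow_nonneg n.cast_nonneg _).trans hb.le) (by linarith)).2 hb.le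
  simpa only [theta, div_div_eq_mul_div] using
    hB b (hnB.trans hb.le) n (by exact_mod_cast hn₁) hnb

/-- `sup { n F̄(2α/θ_{n,b}) : b > n^{β+ε} } → 0` as `n → ∞` (in particular
`F̄(2α/θ_{n,b}) = O(1/n)` uniformly over `b > n^{β+ε}`). -/
theorem stmt2
    (F : Measure ℝ) [IsProbabilityMeasure F]
    (α : ℝ) (hα : 1 < α)
    (L : ℝ → ℝ) (hLpos : ∀ x > 0, 0 < L x) (hL : SlowlyVarying L)
    (htail : ∀ x > 0, rtail F x = L x * x ^ (-α))
    (hmeanInt : Integrable (fun x => x) F) (hmean : ∫ x, x ∂F = 0)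
    (β : ℝ) (hβ : β = 1 / min α 2)
    (ε : ℝ) (hε : 0 < ε) :
    ∀ δ > 0, ∃ N : ℕ, ∀ n ≥ N, ∀ b > (n : ℝ) ^ (β + ε),
      (n : ℝ) * rtail F b < 1 ∧
      (n : ℝ) * rtail F (2 * α / theta F n b) < δ :=
  stmt2_general F α hα L hLpos hL htail β hβ ε hε
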